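/- arXiv:2201.11974 — 8 statements merged into one kernel-verified Lean document; each statement's English description precedes it below -/
import Mathlib

section
/- Let (B, m, Δ, δ) be a double bialgebra such that (B, m, Δ) is a Hopf algebra with antipode S. Then S is a comodule morphism for the coaction δ: δ ∘ S = (S ⊗ Id) ∘ δ. -/
open TensorProduct

/-- A double bialgebra structure on a bialgebra `(B, m, Δ)`: a second coproduct `δ`
(with counit `epsδ`) making `(B, m, δ)` a bialgebra, such that `Δ` and `ε_Δ` are
morphisms of right `(B, m, δ)`-comodules, where `B` coacts on itself by `δ`. -/
structure DoubleBialgebra (K B : Type*) [CommRing K] [Ring B] [Bialgebra K B] where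
  /-- the second coproduct δ -/
  delta : B →ₗ[K] B ⊗[K] B
  /-- the counit ε_δ of δ -/
  epsδ : B →ₗ[K] K
  coassoc : (TensorProduct.assoc K B B B).toLinearMap ∘ₗ delta.rTensor B ∘ₗ delta
      = delta.lTensor B ∘ₗ delta
  counit_left : (TensorProduct.lid K B).toLinearMap ∘ₗ epsδ.rTensor B ∘ₗ delta = LinearMap.id
  counit_right : (TensorProduct.rid K B).toLinearMap ∘ₗ epsδ.lTensor B ∘ₗ delta = LinearMap.id
  delta_one : delta 1 = 1 ⊗ₜ[K] 1
  delta_mul : ∀ a b : B, delta (a * b) = delta a * delta b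
  epsδ_one : epsδ 1 = 1
  epsδ_mul : ∀ a b : B, epsδ (a * b) = epsδ a * epsδ b
  /-- `Δ` is a comodule morphism: `(Δ ⊗ Id) ∘ δ = m_{1,3,24} ∘ (δ ⊗ δ) ∘ Δ`. -/
  compat_comul : (Coalgebra.comul (R := K) (A := B)).rTensor B ∘ₗ delta
      = (LinearMap.mul' K B).lTensor (B ⊗[K] B)
          ∘ₗ (TensorProduct.tensorTensorTensorComm K B B B B).toLinearMap
          ∘ₗ TensorProduct.map delta delta ∘ₗ Coalgebra.comul (R := K) (A := B)
  /-- `ε_Δ` is a comodule morphism: `(ε_Δ ⊗ Id) ∘ δ = ν_B ∘ ε_Δ`. -/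
  compat_counit : (TensorProduct.lid K B).toLinearMap
        ∘ₗ (Coalgebra.counit (R := K) (A := B)).rTensor B ∘ₗ delta
      = Algebra.linearMap K B ∘ₗ Coalgebra.counit (R := K) (A := B)

/-!
In the convolution algebra of linear maps `(B, Δ) → B ⊗ B`, both sides are inverses of `δ`.
Postcomposition with the algebra map `δ` is multiplicative for convolution, so `δ ∘ S` is a left
inverse of `δ ∘ id`. The comodule-morphism axioms for `Δ` and `ε_Δ` say exactly that
`f ↦ (f ⊗ id) ∘ δ` is a unital convolution morphism out of `End(B)`, so `(S ⊗ id) ∘ δ` is a right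
inverse of `(id ⊗ id) ∘ δ`. A left and a right inverse coincide.
-/

open Coalgebra LinearMap WithConv

lemma LinearMap.mul'_comp_map_rTensor {K M A C : Type*} [CommSemiring K] [AddCommMonoid M]
    [Module K M] [Semiring A] [Algebra K A] [Semiring C] [Algebra K C] (f g : M →ₗ[K] A) :
    mul' K (A ⊗[K] C) ∘ₗ map (f.rTensor C) (g.rTensor C)
      = (mul' K A ∘ₗ map f g).rTensor C ∘ₗ (mul' K C).lTensor (M ⊗[K] M)
          ∘ₗ (tensorTensorTensorComm K M C M C).toLinearMap := by
  ext
  simp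

namespace DoubleBialgebra

variable {K B : Type*} [CommRing K] [Ring B] [Bialgebra K B] (D : DoubleBialgebra K B)

def deltaAlgHom : B →ₐ[K] B ⊗[K] B :=
  AlgHom.ofLinearMap D.delta D.delta_one D.delta_mul

lemma rTensor_convOne_comp_delta :
    toConv ((1 : WithConv (B →ₗ[K] B)).ofConv.rTensor B ∘ₗ D.delta) = 1 := by
  ext b
  have hε : counit.rTensor B (D.delta b) = 1 ⊗ₜ algebraMap K B (counit (R := K) b) := by
    apply (TensorProduct.lid K B).injective
    simpa using congr($D.compat_counit b)
  rw [ofConv_toConv, LinearMap.convOne_def, ofConv_toConv, comp_apply, rTensor_comp_apply, hε,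
    rTensor_tmul]
  simp [Algebra.algebraMap_eq_smul_one, ← Algebra.TensorProduct.one_def]

lemma convMul_rTensor_comp_delta (f g : WithConv (B →ₗ[K] B)) :
    toConv (f.ofConv.rTensor B ∘ₗ D.delta) * toConv (g.ofConv.rTensor B ∘ₗ D.delta)
      = toConv ((f * g).ofConv.rTensor B ∘ₗ D.delta) := by
  apply WithConv.ofConv_injective
  calc mul' K (B ⊗[K] B) ∘ₗ map (f.ofConv.rTensor B ∘ₗ D.delta) (g.ofConv.rTensor B ∘ₗ D.delta)
        ∘ₗ comul
      = (mul' K B ∘ₗ map f.ofConv g.ofConv).rTensor B ∘ₗ (mul' K B).lTensor (B ⊗[K] B)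
          ∘ₗ (tensorTensorTensorComm K B B B B).toLinearMap ∘ₗ map D.delta D.delta ∘ₗ comul := by
        simp only [map_comp, ← comp_assoc, mul'_comp_map_rTensor]
    _ = (mul' K B ∘ₗ map f.ofConv g.ofConv ∘ₗ comul).rTensor B ∘ₗ D.delta := by
        rw [← D.compat_comul]
        simp only [rTensor_comp, comp_assoc]

end DoubleBialgebra

/-- If `(B, m, Δ, δ)` is a double bialgebra such that `(B, m, Δ)` is a Hopf algebra
with antipode `S`, then `S` is a comodule morphism for the coaction `δ`:
`δ ∘ S = (S ⊗ Id) ∘ δ`. -/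
theorem antipode_comodule_morphism (K B : Type*) [CommRing K] [Ring B] [HopfAlgebra K B]
    (D : DoubleBialgebra K B) :
    D.delta ∘ₗ HopfAlgebra.antipode (R := K) (A := B)
      = (HopfAlgebra.antipode (R := K) (A := B)).rTensor B ∘ₗ D.delta := by
  have h_left : toConv (D.delta ∘ₗ HopfAlgebra.antipode K) * toConv D.delta = 1 := by
    have := congr(toConv (D.deltaAlgHom.toLinearMap ∘ₗ ofConv $(antipode_mul_id (R := K) (C := B))))
    rwa [algHom_comp_convMul_distrib, algHom_comp_convOne] at this
  have h_right : toConv D.delta * toConv ((HopfAlgebra.antipode K).rTensor B ∘ₗ D.delta) = 1 := by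
    have := D.convMul_rTensor_comp_delta (toConv .id) (toConv (HopfAlgebra.antipode K))
    rwa [id_mul_antipode, D.rTensor_convOne_comp_delta, ofConv_toConv, rTensor_id, id_comp] at this
  exact congr(ofConv $(left_inv_eq_right_inv h_left h_right))
end

section
/- Let (B, m, Δ, δ) be a double bialgebra and Θ : B* → End(B) defined by Θ(λ) = (λ ⊗ Id) ∘ δ. Then for all λ, μ ∈ B*, Θ(λ * μ) = Θ(λ) * Θ(μ) and Θ(λ ⋆ μ) = Θ(μ) ∘ Θ(λ), where * is the convolution product induced by Δ and ⋆ the convolution product induced by δ. Moreover Θ(ε_Δ) = ν_B ∘ ε_Δ and Θ(ε_δ) = Id_B. -/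
open TensorProduct

variable {K B : Type*} [CommRing K] [Ring B] [Bialgebra K B]

/-- convolution product on `End(B)` induced by `Δ` -/
noncomputable def convΔ (f g : B →ₗ[K] B) : B →ₗ[K] B :=
  LinearMap.mul' K B ∘ₗ TensorProduct.map f g ∘ₗ Coalgebra.comul (R := K) (A := B)

/-- convolution product on `B*` induced by `Δ` -/
noncomputable def fconvΔ (f g : B →ₗ[K] K) : B →ₗ[K] K :=
  LinearMap.mul' K K ∘ₗ TensorProduct.map f g ∘ₗ Coalgebra.comul (R := K) (A := B)

/-- convolution product on `B*` induced by `δ` -/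
noncomputable def fconvδ (D : DoubleBialgebra K B) (f g : B →ₗ[K] K) : B →ₗ[K] K :=
  LinearMap.mul' K K ∘ₗ TensorProduct.map f g ∘ₗ D.delta

/-- the map `Θ : B* → End(B)`, `Θ(λ) = (λ ⊗ Id) ∘ δ` -/
noncomputable def Theta (D : DoubleBialgebra K B) (l : B →ₗ[K] K) : B →ₗ[K] B :=
  (TensorProduct.lid K B).toLinearMap ∘ₗ l.rTensor B ∘ₗ D.delta

/-!
Write `Θ(λ) = c_λ ∘ δ`, where `c_λ = (λ ⊗ Id) : B ⊗ B → B` contracts the first factor.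
Evaluating `λ ⋆ μ` on the first factor of `δ` produces `(δ ⊗ Id) ∘ δ`, which coassociativity
turns into `(Id ⊗ δ) ∘ δ`, i.e. first `Θ(μ)` and then `Θ(λ)`. Evaluating `λ * μ` produces
`(Δ ⊗ Id) ∘ δ`, which the comodule compatibility of `Δ` rewrites as `m_{13,24} ∘ (δ ⊗ δ) ∘ Δ`;
contracting against `λ ⊗ μ` then gives `m ∘ (Θ(λ) ⊗ Θ(μ)) ∘ Δ`. The two statements on the
counits are the counit axioms of `δ` and the compatibility of `ε_Δ`.
-/

namespace LinearMap

variable {R M M' N N' A : Type*} [CommRing R]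
  [AddCommGroup M] [Module R M] [AddCommGroup M'] [Module R M']
  [AddCommGroup N] [Module R N] [AddCommGroup N'] [Module R N']

noncomputable def contractFst (l : M →ₗ[R] R) : M ⊗[R] N →ₗ[R] N :=
  (TensorProduct.lid R N).toLinearMap ∘ₗ l.rTensor N

@[simp]
lemma contractFst_tmul (l : M →ₗ[R] R) (x : M) (y : N) :
    contractFst l (x ⊗ₜ[R] y) = l x • y := by
  simp [contractFst]

lemma contractFst_comp (l : M' →ₗ[R] R) (f : M →ₗ[R] M') :
    contractFst (N := N) (l ∘ₗ f) = contractFst l ∘ₗ f.rTensor N := by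
  simp only [contractFst, rTensor_comp, comp_assoc]

lemma comp_contractFst (g : N →ₗ[R] N') (l : M →ₗ[R] R) :
    g ∘ₗ contractFst l = contractFst l ∘ₗ g.lTensor M := by
  ext x y
  simp

lemma contractFst_mul'_map (l : M →ₗ[R] R) (m : M' →ₗ[R] R) :
    contractFst (N := N) (mul' R R ∘ₗ TensorProduct.map l m)
      = contractFst l ∘ₗ (contractFst m).lTensor M
          ∘ₗ (TensorProduct.assoc R M M' N).toLinearMap := by
  ext x y z
  simp [smul_smul, mul_comm]

lemma mul'_map_contractFst [Ring A] [Algebra R A] (l : M →ₗ[R] R) (m : M' →ₗ[R] R) :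
    mul' R A ∘ₗ TensorProduct.map (contractFst l) (contractFst m)
      = contractFst (mul' R R ∘ₗ TensorProduct.map l m) ∘ₗ (mul' R A).lTensor (M ⊗[R] M')
          ∘ₗ (TensorProduct.tensorTensorTensorComm R M A M' A).toLinearMap := by
  ext x a y b
  simp [smul_smul, mul_comm]

end LinearMap

open LinearMap

lemma Theta_eq_contractFst_comp (D : DoubleBialgebra K B) (l : B →ₗ[K] K) :
    Theta D l = contractFst l ∘ₗ D.delta :=
  rfl

lemma Theta_fconvδ (D : DoubleBialgebra K B) (l m : B →ₗ[K] K) :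
    Theta D (fconvδ D l m) = Theta D m ∘ₗ Theta D l := calc
  Theta D (fconvδ D l m)
      = contractFst (mul' K K ∘ₗ TensorProduct.map l m) ∘ₗ D.delta.rTensor B ∘ₗ D.delta := by
        rw [Theta_eq_contractFst_comp, fconvδ, ← comp_assoc, contractFst_comp, comp_assoc]
  _ = contractFst l ∘ₗ (contractFst m).lTensor B ∘ₗ D.delta.lTensor B ∘ₗ D.delta := by
        rw [contractFst_mul'_map, comp_assoc, comp_assoc, D.coassoc]
  _ = Theta D m ∘ₗ Theta D l := by
        simp only [Theta_eq_contractFst_comp, ← comp_assoc, comp_contractFst, lTensor_comp]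

lemma Theta_fconvΔ (D : DoubleBialgebra K B) (l m : B →ₗ[K] K) :
    Theta D (fconvΔ l m) = convΔ (Theta D l) (Theta D m) := calc
  Theta D (fconvΔ l m)
      = contractFst (mul' K K ∘ₗ TensorProduct.map l m)
          ∘ₗ (Coalgebra.comul (R := K) (A := B)).rTensor B ∘ₗ D.delta := by
        rw [Theta_eq_contractFst_comp, fconvΔ, ← comp_assoc, contractFst_comp, comp_assoc]
  _ = mul' K B ∘ₗ TensorProduct.map (contractFst l) (contractFst m)
          ∘ₗ TensorProduct.map D.delta D.delta ∘ₗ Coalgebra.comul (R := K) (A := B) := by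
        simp only [D.compat_comul, ← comp_assoc, mul'_map_contractFst]
  _ = convΔ (Theta D l) (Theta D m) := by
        rw [convΔ, Theta_eq_contractFst_comp, Theta_eq_contractFst_comp, map_comp, comp_assoc]

/-- For a double bialgebra `(B, m, Δ, δ)` and `Θ(λ) = (λ ⊗ Id) ∘ δ`:
`Θ(λ * μ) = Θ(λ) * Θ(μ)`, `Θ(λ ⋆ μ) = Θ(μ) ∘ Θ(λ)`, `Θ(ε_Δ) = ν_B ∘ ε_Δ`
and `Θ(ε_δ) = Id_B`. -/
theorem theta_properties (D : DoubleBialgebra K B) :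
    (∀ l m : B →ₗ[K] K,
        Theta D (fconvΔ l m) = convΔ (Theta D l) (Theta D m)
        ∧ Theta D (fconvδ D l m) = Theta D m ∘ₗ Theta D l)
    ∧ Theta D (Coalgebra.counit (R := K) (A := B))
        = Algebra.linearMap K B ∘ₗ Coalgebra.counit (R := K) (A := B)
    ∧ Theta D D.epsδ = LinearMap.id :=
  ⟨fun l m => ⟨Theta_fconvΔ D l m, Theta_fconvδ D l m⟩, D.compat_counit, D.counit_left⟩
end

section
/- Let (B, m, Δ, δ) be a double bialgebra. Then (B, m, Δ) is a Hopf algebra if and only if the counit ε_δ of δ has an inverse in the convolution algebra (B*, *) for the convolution product induced by Δ; and in this case the antipode is S = (ε_δ^{*-1} ⊗ Id) ∘ δ. -/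
open TensorProduct

variable {K B : Type*} [CommRing K] [Ring B] [Bialgebra K B]

/-- `S : B → B` is an antipode for the bialgebra `(B, m, Δ)`. -/
def IsAntipode (S : B →ₗ[K] B) : Prop :=
  convΔ S LinearMap.id = Algebra.linearMap K B ∘ₗ Coalgebra.counit (R := K) (A := B)
  ∧ convΔ LinearMap.id S = Algebra.linearMap K B ∘ₗ Coalgebra.counit (R := K) (A := B)

/-- characters of `(B, m, Δ)`: algebra morphisms `B → K` -/
def IsChar (l : B →ₗ[K] K) : Prop := l 1 = 1 ∧ ∀ a b : B, l (a * b) = l a * l b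

/-- infinitesimal characters of `(B, m, Δ)`: `ε_Δ`-derivations `B → K` -/
def IsInfChar (l : B →ₗ[K] K) : Prop :=
  ∀ a b : B, l (a * b) = Coalgebra.counit (R := K) (A := B) a * l b
    + l a * Coalgebra.counit (R := K) (A := B) b

/-!
`Θ(λ) = (λ ⊗ Id) ∘ δ` is a unital algebra morphism `(B*, *) → (End B, *)`: multiplicativity is the
comodule property of `Δ`, and it sends the unit `ε_Δ` of `B*` to the unit `η ∘ ε_Δ` of `End B` by
the comodule property of `ε_Δ`. As `Θ(ε_δ) = Id`, it carries a `*`-inverse of `ε_δ` to a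
`*`-inverse of `Id`, i.e. to an antipode. Conversely, composing with the character `ε_δ` is an
algebra morphism `(End B, *) → (B*, *)` sending `Id` to `ε_δ`, so `ε_δ ∘ S` inverts `ε_δ`.
-/

namespace DoubleBialgebra

variable (D : DoubleBialgebra K B)

theorem Theta_epsδ : Theta D D.epsδ = LinearMap.id := D.counit_left

theorem Theta_counit :
    Theta D Coalgebra.counit = Algebra.linearMap K B ∘ₗ Coalgebra.counit := D.compat_counit

theorem Theta_fconvΔ (f g : B →ₗ[K] K) :
    Theta D (fconvΔ f g) = convΔ (Theta D f) (Theta D g) := by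
  have evaluate_after_mul₁₃₂₄ :
      (TensorProduct.lid K B).toLinearMap ∘ₗ (LinearMap.mul' K K ∘ₗ map f g).rTensor B
          ∘ₗ (LinearMap.mul' K B).lTensor (B ⊗[K] B)
          ∘ₗ (tensorTensorTensorComm K B B B B).toLinearMap
        = LinearMap.mul' K B ∘ₗ map ((TensorProduct.lid K B).toLinearMap ∘ₗ f.rTensor B)
            ((TensorProduct.lid K B).toLinearMap ∘ₗ g.rTensor B) := by
    ext a b c d
    simp [mul_smul, smul_comm (g _)]
  calc Theta D (fconvΔ f g)
      = (TensorProduct.lid K B).toLinearMap ∘ₗ (LinearMap.mul' K K ∘ₗ map f g).rTensor B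
          ∘ₗ Coalgebra.comul.rTensor B ∘ₗ D.delta := by
        simp only [Theta, fconvΔ, LinearMap.rTensor_comp, LinearMap.comp_assoc]
    _ = convΔ (Theta D f) (Theta D g) := by
        rw [D.compat_comul]
        simp only [← LinearMap.comp_assoc] at evaluate_after_mul₁₃₂₄ ⊢
        rw [evaluate_after_mul₁₃₂₄]
        simp only [convΔ, Theta, map_comp, LinearMap.comp_assoc]

theorem isAntipode_Theta {m : B →ₗ[K] K} (hleft : fconvΔ m D.epsδ = Coalgebra.counit)
    (hright : fconvΔ D.epsδ m = Coalgebra.counit) : IsAntipode (Theta D m) := by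
  constructor
  · rw [← Theta_epsδ D, ← Theta_fconvΔ, hleft, Theta_counit]
  · rw [← Theta_epsδ D, ← Theta_fconvΔ, hright, Theta_counit]

theorem isChar_epsδ : IsChar D.epsδ := ⟨D.epsδ_one, D.epsδ_mul⟩

end DoubleBialgebra

theorem IsChar.comp_convΔ {φ : B →ₗ[K] K} (hφ : IsChar φ) (f g : B →ₗ[K] B) :
    φ ∘ₗ convΔ f g = fconvΔ (φ ∘ₗ f) (φ ∘ₗ g) := by
  have hmul : φ ∘ₗ LinearMap.mul' K B = LinearMap.mul' K K ∘ₗ map φ φ := by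
    ext a b
    simp [hφ.2]
  simp only [convΔ, fconvΔ, ← LinearMap.comp_assoc, hmul, map_comp]

theorem IsChar.comp_algebra_linearMap {φ : B →ₗ[K] K} (hφ : IsChar φ) :
    φ ∘ₗ Algebra.linearMap K B = LinearMap.id := by
  ext
  simp [hφ.1]

theorem IsAntipode.fconvΔ_comp_self {S : B →ₗ[K] B} (hS : IsAntipode S) {φ : B →ₗ[K] K}
    (hφ : IsChar φ) :
    fconvΔ (φ ∘ₗ S) φ = Coalgebra.counit ∧ fconvΔ φ (φ ∘ₗ S) = Coalgebra.counit := by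
  have h₁ := congrArg (φ ∘ₗ ·) hS.1
  have h₂ := congrArg (φ ∘ₗ ·) hS.2
  simp only [hφ.comp_convΔ, LinearMap.comp_id, ← LinearMap.comp_assoc,
    hφ.comp_algebra_linearMap, LinearMap.id_comp] at h₁ h₂
  exact ⟨h₁, h₂⟩

/-- `(B, m, Δ)` is a Hopf algebra iff `ε_δ` is `*`-invertible in `B*`; in that case the
antipode is `S = (ε_δ^{*-1} ⊗ Id) ∘ δ`. -/
theorem hopf_iff_epsdelta_invertible (D : DoubleBialgebra K B) :
    ((∃ S : B →ₗ[K] B, IsAntipode S) ↔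
      (∃ m : B →ₗ[K] K, fconvΔ m D.epsδ = Coalgebra.counit (R := K) (A := B)
        ∧ fconvΔ D.epsδ m = Coalgebra.counit (R := K) (A := B)))
    ∧ ∀ m : B →ₗ[K] K,
        fconvΔ m D.epsδ = Coalgebra.counit (R := K) (A := B) →
        fconvΔ D.epsδ m = Coalgebra.counit (R := K) (A := B) →
        IsAntipode (Theta D m) :=
  ⟨⟨fun ⟨S, hS⟩ => ⟨D.epsδ ∘ₗ S, hS.fconvΔ_comp_self D.isChar_epsδ⟩,
    fun ⟨m, hleft, hright⟩ => ⟨Theta D m, D.isAntipode_Theta hleft hright⟩⟩,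
   fun _ => D.isAntipode_Theta⟩
end

section
/- Let (B, m, Δ, δ) be a double bialgebra such that (B, m, Δ) is a Hopf algebra. Then the product m is commutative. -/
open TensorProduct

/-!
Let `θ(λ) = (λ ⊗ id) ∘ δ` for linear forms `λ` on `B`. Because `Δ` and `ε_Δ` are comodule
morphisms, `θ` is a monoid morphism from the convolution monoid of `B →ₗ K` to that of
`B →ₗ B`, and `θ(ε_δ) = id`. The character `ε_δ` has convolution inverse `ε_δ ∘ S`, again a
character since `K` is commutative, so `S = θ(ε_δ ∘ S)`; as `δ` is multiplicative, so is `S`.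
A multiplicative antipode is involutive (`S ∘ S` and `id` are both convolution inverses of `S`),
and a bijection that is both multiplicative and anti-multiplicative forces `m` to be commutative.
-/

open Coalgebra WithConv

namespace HopfAlgebra

variable {R A : Type*} [CommSemiring R] [Semiring A] [HopfAlgebra R A]

lemma algHom_comp_antipode_convMul {B : Type*} [Semiring B] [Algebra R B] (f : A →ₐ[R] B) :
    toConv (f.toLinearMap ∘ₗ antipode R) * toConv f.toLinearMap = 1 := by
  ext a
  simp [(ℛ R a).convMul_apply, ← map_mul, ← map_sum, sum_antipode_mul_eq_algebraMap_counit]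

def algHomCompAntipode {C : Type*} [CommSemiring C] [Algebra R C] (f : A →ₐ[R] C) :
    A →ₐ[R] C :=
  .ofLinearMap (f.toLinearMap ∘ₗ antipode R) (by simp)
    (fun a b => by simp [antipode_mul_antidistrib, mul_comm])

lemma antipode_antipode_of_map_mul
    (h : ∀ a b : A, antipode R (a * b) = antipode R a * antipode R b) (a : A) :
    antipode R (antipode R a) = a := by
  let S : A →ₐ[R] A := .ofLinearMap (antipode R) antipode_one h
  have hSS : toConv (antipode R ∘ₗ antipode R) = toConv (LinearMap.id : A →ₗ[R] A) :=
    left_inv_eq_right_inv (algHom_comp_antipode_convMul S) LinearMap.antipode_mul_id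
  exact congr($hSS a)

lemma mul_comm_of_antipode_map_mul
    (h : ∀ a b : A, antipode R (a * b) = antipode R a * antipode R b) (a b : A) :
    a * b = b * a := by
  have hinv := antipode_antipode_of_map_mul h
  calc a * b = antipode R (antipode R a) * antipode R (antipode R b) := by rw [hinv, hinv]
    _ = antipode R (antipode R (b * a)) := by rw [← h, ← antipode_mul_antidistrib]
    _ = b * a := hinv _

end HopfAlgebra

namespace DoubleBialgebra

section Bialgebra

variable {K B : Type*} [CommRing K] [Ring B] [Bialgebra K B] (D : DoubleBialgebra K B)

def epsδAlgHom : B →ₐ[K] K := .ofLinearMap D.epsδ D.epsδ_one D.epsδ_mul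

/-- The map `Θ` of the paper. -/
def theta : WithConv (B →ₗ[K] K) →* WithConv (B →ₗ[K] B) where
  toFun f := toConv ((TensorProduct.lid K B).toLinearMap ∘ₗ f.ofConv.rTensor B ∘ₗ D.delta)
  map_one' := congrArg toConv D.compat_counit
  map_mul' f g := by
    apply ofConv_injective
    have hmul : (TensorProduct.lid K B).toLinearMap
          ∘ₗ (LinearMap.mul' K K ∘ₗ map f.ofConv g.ofConv).rTensor B
          ∘ₗ (LinearMap.mul' K B).lTensor (B ⊗[K] B)
          ∘ₗ (tensorTensorTensorComm K B B B B).toLinearMap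
        = LinearMap.mul' K B ∘ₗ map ((TensorProduct.lid K B).toLinearMap ∘ₗ f.ofConv.rTensor B)
            ((TensorProduct.lid K B).toLinearMap ∘ₗ g.ofConv.rTensor B) := by
      ext a b c d
      simp [mul_smul, smul_comm (f.ofConv a)]
    calc _ = ((TensorProduct.lid K B).toLinearMap
            ∘ₗ (LinearMap.mul' K K ∘ₗ map f.ofConv g.ofConv).rTensor B)
            ∘ₗ comul.rTensor B ∘ₗ D.delta := by
          simp only [LinearMap.convMul_def, ofConv_toConv, LinearMap.rTensor_comp,
            LinearMap.comp_assoc]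
      _ = _ := by
          rw [D.compat_comul]
          simp only [← LinearMap.comp_assoc] at hmul ⊢
          rw [hmul]
          simp only [LinearMap.convMul_def, ofConv_toConv, map_comp, LinearMap.comp_assoc]

lemma theta_epsδ : D.theta (toConv D.epsδ) = toConv LinearMap.id :=
  congrArg toConv D.counit_left

lemma theta_map_mul (f : B →ₐ[K] K) (x y : B) :
    D.theta (toConv f.toLinearMap) (x * y)
      = D.theta (toConv f.toLinearMap) x * D.theta (toConv f.toLinearMap) y := by
  have hθ : D.theta (toConv f.toLinearMap) = toConv (((Algebra.TensorProduct.lid K B).toAlgHom.comp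
        (Algebra.TensorProduct.map f (AlgHom.id K B))).toLinearMap ∘ₗ D.delta) :=
    rfl
  simp only [hθ, ofConv_toConv, LinearMap.comp_apply, D.delta_mul, AlgHom.toLinearMap_apply,
    map_mul]

end Bialgebra

section HopfAlgebra

variable {K B : Type*} [CommRing K] [Ring B] [HopfAlgebra K B]

lemma antipode_eq_theta (D : DoubleBialgebra K B) :
    toConv (HopfAlgebra.antipode K) =
      D.theta (toConv (HopfAlgebra.algHomCompAntipode D.epsδAlgHom).toLinearMap) := by
  refine (left_inv_eq_right_inv (a := toConv LinearMap.id) ?_ LinearMap.id_mul_antipode).symm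
  rw [← D.theta_epsδ, ← map_mul]
  exact (congrArg D.theta (HopfAlgebra.algHom_comp_antipode_convMul D.epsδAlgHom)).trans
    D.theta.map_one

lemma antipode_map_mul (D : DoubleBialgebra K B) (x y : B) :
    HopfAlgebra.antipode K (x * y) = HopfAlgebra.antipode K x * HopfAlgebra.antipode K y := by
  rw [← ofConv_toConv (HopfAlgebra.antipode K), D.antipode_eq_theta, theta_map_mul]

end HopfAlgebra

end DoubleBialgebra

/-- If `(B, m, Δ, δ)` is a double bialgebra such that `(B, m, Δ)` is a Hopf algebra,
then the product `m` is commutative. -/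
theorem double_bialgebra_hopf_commutative {K B : Type*} [CommRing K] [Ring B]
    [HopfAlgebra K B] (D : DoubleBialgebra K B) :
    ∀ a b : B, a * b = b * a :=
  HopfAlgebra.mul_comm_of_antipode_map_mul D.antipode_map_mul
end

section
/- Let (B, m, Δ, δ) be a double bialgebra. If λ is an infinitesimal character of (B, m, Δ) and μ ∈ B*, then λ ⋆ μ is an infinitesimal character, where ⋆ is the convolution induced by δ. -/
open TensorProduct

variable {K B : Type*} [CommRing K] [Ring B] [Bialgebra K B]

/-! If `λ` is an `ε`-derivation, then on a product `x y` of two tensors the functional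
`λ ⊗ μ` splits Leibniz-style, the `ε` landing on the left tensor factor. For `x = δ a`,
`y = δ b` that factor is `(ε ⊗ Id)(δ a) = ε(a) 1` because `ε_Δ` is a comodule morphism,
so `(λ ⋆ μ)(a b) = ε(a) (λ ⋆ μ)(b) + (λ ⋆ μ)(a) ε(b)`. -/

section Leibniz

variable {A : Type*} [Semiring A] [Algebra K A]

noncomputable def contractLeftFactor (e : A →ₗ[K] K) : A ⊗[K] A →ₗ[K] A :=
  (TensorProduct.lid K A).toLinearMap ∘ₗ e.rTensor A

@[simp]
lemma contractLeftFactor_tmul (e : A →ₗ[K] K) (x y : A) :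
    contractLeftFactor e (x ⊗ₜ[K] y) = e x • y :=
  rfl

lemma mul'_map_mul_of_derivation (e l m : A →ₗ[K] K)
    (hl : ∀ a b : A, l (a * b) = e a * l b + l a * e b) (x y : A ⊗[K] A) :
    LinearMap.mul' K K (map l m (x * y))
      = LinearMap.mul' K K (map l m ((1 ⊗ₜ[K] contractLeftFactor e x) * y))
        + LinearMap.mul' K K (map l m (x * (1 ⊗ₜ[K] contractLeftFactor e y))) := by
  induction x using TensorProduct.induction_on with
  | zero => simp
  | add x x' hx hx' => simp only [add_mul, map_add, tmul_add, hx, hx']; ring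
  | tmul x₁ x₂ =>
    induction y using TensorProduct.induction_on with
    | zero => simp
    | add y y' hy hy' => simp only [mul_add, map_add, tmul_add, hy, hy']; ring
    | tmul y₁ y₂ =>
      simp only [contractLeftFactor_tmul, Algebra.TensorProduct.tmul_mul_tmul, tmul_smul, one_mul,
        mul_one, smul_mul_assoc, mul_smul_comm, map_smul, map_tmul, LinearMap.mul'_apply,
        smul_eq_mul, hl]
      ring

end Leibniz

lemma DoubleBialgebra.contractLeftFactor_counit_delta (D : DoubleBialgebra K B) (a : B) :
    contractLeftFactor Coalgebra.counit (D.delta a) = Coalgebra.counit (R := K) a • (1 : B) :=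
  (LinearMap.congr_fun D.compat_counit a).trans (Algebra.algebraMap_eq_smul_one _)

/-- In a double bialgebra, if `λ` is an infinitesimal character and `μ ∈ B*`,
then `λ ⋆ μ` is an infinitesimal character. -/
theorem infChar_star_stable (D : DoubleBialgebra K B) (l m : B →ₗ[K] K)
    (hl : IsInfChar l) : IsInfChar (fconvδ D l m) := by
  intro a b
  have hsplit := mul'_map_mul_of_derivation Coalgebra.counit l m hl (D.delta a) (D.delta b)
  simp only [D.contractLeftFactor_counit_delta, tmul_smul, ← Algebra.TensorProduct.one_def,
    smul_mul_assoc, mul_smul_comm, one_mul, mul_one, map_smul, smul_eq_mul] at hsplit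
  simp only [fconvδ, LinearMap.comp_apply, D.delta_mul, hsplit]
  ring
end

section
/- Let (B, m, Δ, δ) be a double bialgebra and A an algebra. For any f, g ∈ Hom(B, A) and any character λ of B, (f * g) ↼ λ = (f ↼ λ) * (g ↼ λ), where f * g = m_A ∘ (f ⊗ g) ∘ Δ and f ↼ λ = (f ⊗ λ) ∘ δ. In particular, (Char(B), ⋆) acts on the monoid (Char(B), *) by monoid endomorphisms. -/
open TensorProduct

variable {K B : Type*} [CommRing K] [Ring B] [Bialgebra K B]

/-- the right action `f ↼ λ = (f ⊗ λ) ∘ δ` of `B*` on `Hom(B, A)` -/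
noncomputable def hAct {A : Type*} [AddCommGroup A] [Module K A]
    (D : DoubleBialgebra K B) (f : B →ₗ[K] A) (l : B →ₗ[K] K) : B →ₗ[K] A :=
  (TensorProduct.rid K A).toLinearMap ∘ₗ TensorProduct.map f l ∘ₗ D.delta

/-- convolution product on `Hom(B, A)` induced by `Δ` -/
noncomputable def convA {A : Type*} [Ring A] [Algebra K A] (f g : B →ₗ[K] A) : B →ₗ[K] A :=
  LinearMap.mul' K A ∘ₗ TensorProduct.map f g ∘ₗ Coalgebra.comul (R := K) (A := B)

/-!
Because `Δ` is a morphism of right `δ`-comodules, `(Δ ⊗ id) ∘ δ = m_{1,3,24} ∘ (δ ⊗ δ) ∘ Δ`.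
Applying `m_A ∘ (f ⊗ g) ⊗ λ` to both sides expresses `(f * g) ↼ λ` as a `Δ`-convolution in which
`λ` is evaluated on products `b' b''` of the second `δ`-legs; multiplicativity of `λ` splits this
into `(f ↼ λ) * (g ↼ λ)`. For `A = K` the action `↼` is the `δ`-convolution, and the
`δ`-convolution `(λ ⊗ μ) ∘ δ` of two characters is again one since `δ` is an algebra map.
-/

open LinearMap in
theorem rid_comp_map_mul'_comp_lTensor_mul'_comp_tensorTensorTensorComm
    {R M N C A : Type*} [CommSemiring R] [AddCommMonoid M] [Module R M] [AddCommMonoid N]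
    [Module R N] [Semiring C] [Algebra R C] [Semiring A] [Algebra R A]
    (f : M →ₗ[R] A) (g : N →ₗ[R] A) {l : C →ₗ[R] R} (hl : ∀ a b, l (a * b) = l a * l b) :
    (TensorProduct.rid R A).toLinearMap ∘ₗ map (mul' R A ∘ₗ map f g) l
        ∘ₗ (mul' R C).lTensor (M ⊗[R] N) ∘ₗ (tensorTensorTensorComm R M C N C).toLinearMap
      = mul' R A ∘ₗ map ((TensorProduct.rid R A).toLinearMap ∘ₗ map f l)
          ((TensorProduct.rid R A).toLinearMap ∘ₗ map g l) := by
  refine TensorProduct.ext_fourfold' fun m c n c' => ?_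
  simp [hl, mul_smul, mul_comm (l c)]

open LinearMap in
theorem hAct_convA {A : Type*} [Ring A] [Algebra K A] (D : DoubleBialgebra K B)
    (f g : B →ₗ[K] A) {l : B →ₗ[K] K} (hl : ∀ a b, l (a * b) = l a * l b) :
    hAct D (convA f g) l = convA (hAct D f l) (hAct D g l) := by
  calc hAct D (convA f g) l
      = ((TensorProduct.rid K A).toLinearMap ∘ₗ map (mul' K A ∘ₗ map f g) l)
          ∘ₗ (Coalgebra.comul.rTensor B ∘ₗ D.delta) := by
        ext x
        simp [hAct, convA, comp_assoc]
    _ = ((TensorProduct.rid K A).toLinearMap ∘ₗ map (mul' K A ∘ₗ map f g) l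
          ∘ₗ (mul' K B).lTensor (B ⊗[K] B) ∘ₗ (tensorTensorTensorComm K B B B B).toLinearMap)
          ∘ₗ (map D.delta D.delta ∘ₗ Coalgebra.comul) := by
        rw [D.compat_comul]; rfl
    _ = convA (hAct D f l) (hAct D g l) := by
        rw [rid_comp_map_mul'_comp_lTensor_mul'_comp_tensorTensorTensorComm f g hl]
        simp only [convA, hAct, map_comp, comp_assoc]

theorem TensorProduct.rid_eq_mul' {R : Type*} [CommSemiring R] :
    (TensorProduct.rid R R).toLinearMap = LinearMap.mul' R R :=
  TensorProduct.ext' fun a b => by simp [mul_comm]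

theorem hAct_eq_fconvδ (D : DoubleBialgebra K B) (f l : B →ₗ[K] K) :
    hAct D f l = fconvδ D f l := by
  rw [hAct, fconvδ, TensorProduct.rid_eq_mul']

theorem convA_eq_fconvΔ (f g : B →ₗ[K] K) : convA f g = fconvΔ f g := rfl

theorem isChar_toLinearMap (φ : B →ₐ[K] K) : IsChar φ.toLinearMap :=
  ⟨map_one φ, map_mul φ⟩

def IsChar.toAlgHom {l : B →ₗ[K] K} (hl : IsChar l) : B →ₐ[K] K :=
  AlgHom.ofLinearMap l hl.1 hl.2

def DoubleBialgebra.deltaAlgHom_s7 (D : DoubleBialgebra K B) : B →ₐ[K] B ⊗[K] B :=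
  AlgHom.ofLinearMap D.delta D.delta_one D.delta_mul

theorem fconvδ_eq_productMap_comp_deltaAlgHom (D : DoubleBialgebra K B) {l m : B →ₗ[K] K}
    (hl : IsChar l) (hm : IsChar m) :
    fconvδ D l m = ((Algebra.TensorProduct.productMap hl.toAlgHom hm.toAlgHom).comp
      D.deltaAlgHom_s7).toLinearMap := by
  rw [Algebra.TensorProduct.productMap_eq_comp_map]
  rfl

theorem IsChar.fconvδ (D : DoubleBialgebra K B) {l m : B →ₗ[K] K} (hl : IsChar l)
    (hm : IsChar m) : IsChar (fconvδ D l m) := by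
  rw [fconvδ_eq_productMap_comp_deltaAlgHom D hl hm]
  exact isChar_toLinearMap _

/-- For any algebra `A`, `f, g ∈ Hom(B, A)` and any character `λ` of `B`,
`(f * g) ↼ λ = (f ↼ λ) * (g ↼ λ)`. In particular `(Char(B), ⋆)` acts on
`(Char(B), *)` (and on `(B*, *)`) by endomorphisms. -/
theorem hAct_conv_distrib {A : Type*} [Ring A] [Algebra K A] (D : DoubleBialgebra K B) :
    (∀ (f g : B →ₗ[K] A) (l : B →ₗ[K] K), IsChar l →
        hAct D (convA f g) l = convA (hAct D f l) (hAct D g l))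
    ∧ (∀ (l₁ l₂ m : B →ₗ[K] K), IsChar m →
        fconvδ D (fconvΔ l₁ l₂) m = fconvΔ (fconvδ D l₁ m) (fconvδ D l₂ m))
    ∧ (∀ (l m : B →ₗ[K] K), IsChar l → IsChar m → IsChar (fconvδ D l m)) := by
  refine ⟨fun f g l hl => hAct_convA D f g hl.2, fun l₁ l₂ m hm => ?_,
    fun l m hl hm => hl.fconvδ D hm⟩
  simpa only [hAct_eq_fconvδ, convA_eq_fconvΔ] using hAct_convA (A := K) D l₁ l₂ hm.2
end

section
/- Let G be a finite simple graph and x, y ∈ V(G). Then the sets O(G, x) and O(G, y) of acyclic orientations of G whose unique source is x, respectively y, are in bijection. -/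
section Orientations

variable {V : Type*}

/-- `r` is an orientation of the simple graph `G`: each edge of `G` receives exactly
one direction, and there are no other arcs. -/
def IsOrientation (G : SimpleGraph V) (r : V → V → Prop) : Prop :=
  (∀ a b : V, r a b → G.Adj a b) ∧ (∀ a b : V, G.Adj a b → (r a b ↔ ¬ r b a))

/-- the oriented graph `r` is acyclic: no directed cycle (no nontrivial directed
walk from a vertex to itself) -/
def IsAcyclicOrientation (G : SimpleGraph V) (r : V → V → Prop) : Prop :=
  IsOrientation G r ∧ ∀ a : V, ¬ Relation.TransGen r a a

/-- `O(G, x)`: the set of acyclic orientations of `G` whose set of sources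
(vertices with no incoming arc) is exactly `{x}` -/
def acyclicOrientationsWithSource (G : SimpleGraph V) (x : V) : Set (V → V → Prop) :=
  {r | IsAcyclicOrientation G r ∧ {a : V | ∀ b : V, ¬ r b a} = {x}}

end Orientations

/-!
Let `x` be the unique source of an acyclic orientation and `xy` an edge, and let `A` be the set
of vertices reachable from `y`. Every arc between `A` and its complement points into `A`;
reversing all of them keeps the orientation acyclic and makes `y` its unique source. In the new
orientation the vertices reachable from `x` are exactly those outside `A`, so the same operation
along `yx` undoes the first one. Composing these bijections along a path from `x` to `y` gives
the theorem; without such a path both sets are empty, because the unique source of an acyclic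
orientation reaches every vertex.
-/

open Relation

namespace AcyclicOrientation

variable {V : Type*} {G : SimpleGraph V} {r : V → V → Prop} {S : Set V} {a b x y : V}

def reachSet (r : V → V → Prop) (y : V) : Set V := {a | ReflTransGen r y a}

def flipAcross (r : V → V → Prop) (S : Set V) : V → V → Prop :=
  fun a b => ((a ∈ S ↔ b ∈ S) ∧ r a b) ∨ (¬ (a ∈ S ↔ b ∈ S) ∧ r b a)

def IsForwardClosed (r : V → V → Prop) (S : Set V) : Prop :=
  ∀ ⦃a b⦄, r a b → a ∈ S → b ∈ S

lemma flipAcross_iff_of_iff (h : a ∈ S ↔ b ∈ S) : flipAcross r S a b ↔ r a b := by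
  simp only [flipAcross]; tauto

lemma flipAcross_iff_of_not_iff (h : ¬ (a ∈ S ↔ b ∈ S)) : flipAcross r S a b ↔ r b a := by
  simp only [flipAcross]; tauto

lemma flipAcross_compl : flipAcross r Sᶜ = flipAcross r S := by
  funext a b
  simp only [flipAcross, Set.mem_compl_iff, not_iff_not]

lemma flipAcross_flipAcross : flipAcross (flipAcross r S) S = r := by
  funext a b
  apply propext
  by_cases h : a ∈ S ↔ b ∈ S
  · rw [flipAcross_iff_of_iff h, flipAcross_iff_of_iff h]
  · rw [flipAcross_iff_of_not_iff h, flipAcross_iff_of_not_iff fun h' => h h'.symm]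

lemma isForwardClosed_reachSet : IsForwardClosed r (reachSet r y) :=
  fun _ _ hab ha => ReflTransGen.tail ha hab

lemma IsForwardClosed.mem_of_reflTransGen (hS : IsForwardClosed r S)
    (h : ReflTransGen r a b) (ha : a ∈ S) : b ∈ S := by
  induction h with
  | refl => exact ha
  | tail _ hcb ih => exact hS hcb ih

lemma IsForwardClosed.compl_flipAcross (hS : IsForwardClosed r S) :
    IsForwardClosed (flipAcross r S) Sᶜ := by
  intro a b hab ha hb
  exact ha (hS ((flipAcross_iff_of_not_iff fun h => ha (h.mpr hb)).mp hab) hb)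

/-- A path between two vertices on the same side of a forward-closed cut never crosses it,
so it survives the reversal of the cut. -/
lemma IsForwardClosed.transGen_flipAcross (hS : IsForwardClosed r S)
    (h : TransGen r a b) (hab : a ∈ S ↔ b ∈ S) : TransGen (flipAcross r S) a b := by
  induction h with
  | single hab' => exact .single ((flipAcross_iff_of_iff hab).mpr hab')
  | @tail c b hac hcb ih =>
    have hac' : a ∈ S ↔ c ∈ S :=
      ⟨fun ha => hS.mem_of_reflTransGen hac.to_reflTransGen ha,
       fun hc => hab.mpr (hS hcb hc)⟩
    exact (ih hac').tail ((flipAcross_iff_of_iff (hac'.symm.trans hab)).mpr hcb)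

lemma IsForwardClosed.reflTransGen_flipAcross (hS : IsForwardClosed r S)
    (h : ReflTransGen r a b) (hab : a ∈ S ↔ b ∈ S) : ReflTransGen (flipAcross r S) a b := by
  rcases reflTransGen_iff_eq_or_transGen.mp h with rfl | h
  · exact .refl
  · exact (hS.transGen_flipAcross h hab).to_reflTransGen

lemma IsOrientation.flipAcross (ho : IsOrientation G r) (S : Set V) :
    IsOrientation G (flipAcross r S) := by
  refine ⟨fun a b hab => ?_, fun a b hab => ?_⟩
  · rcases hab with ⟨-, h⟩ | ⟨-, h⟩
    exacts [ho.1 _ _ h, (ho.1 _ _ h).symm]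
  · by_cases h : a ∈ S ↔ b ∈ S
    · rw [flipAcross_iff_of_iff h, flipAcross_iff_of_iff h.symm]
      exact ho.2 a b hab
    · rw [flipAcross_iff_of_not_iff h, flipAcross_iff_of_not_iff fun h' => h h'.symm]
      exact ho.2 b a hab.symm

lemma IsAcyclicOrientation.flipAcross (hr : IsAcyclicOrientation G r)
    (hS : IsForwardClosed r S) : IsAcyclicOrientation G (flipAcross r S) := by
  refine ⟨IsOrientation.flipAcross hr.1 S, fun a h => hr.2 a ?_⟩
  simpa only [flipAcross_compl, flipAcross_flipAcross] using
    hS.compl_flipAcross.transGen_flipAcross h Iff.rfl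

lemma wellFounded_of_acyclic [Finite V] (hac : ∀ a : V, ¬ TransGen r a a) :
    WellFounded r :=
  have : Std.Irrefl (TransGen r) := ⟨hac⟩
  Subrelation.wf TransGen.single (Finite.wellFounded_of_trans_of_irrefl _)

/-- In a finite acyclic orientation, every vertex is reached from a source, so having the
single source `x` means reaching every vertex from `x`. -/
lemma mem_acyclicOrientationsWithSource_iff [Finite V] :
    r ∈ acyclicOrientationsWithSource G x ↔
      IsAcyclicOrientation G r ∧ ∀ a, ReflTransGen r x a := by
  refine ⟨fun ⟨hr, hsrc⟩ => ⟨hr, fun a => ?_⟩, fun ⟨hr, hreach⟩ => ⟨hr, ?_⟩⟩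
  · induction a using (wellFounded_of_acyclic hr.2).induction with
    | _ a ih =>
      by_cases hax : a = x
      · exact hax ▸ .refl
      · have : ¬ ∀ b, ¬ r b a := fun h => hax (Set.ext_iff.mp hsrc a |>.mp h)
        obtain ⟨b, hba⟩ := not_forall_not.mp this
        exact (ih b hba).tail hba
  · ext a
    refine ⟨fun ha => ?_, fun hax b hba => ?_⟩
    · rcases (hreach a).cases_tail with h | ⟨c, -, hca⟩
      exacts [h, absurd hca (ha c)]
    · rw [Set.mem_singleton_iff.mp hax] at hba
      exact hr.2 x (TransGen.tail' (hreach b) hba)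

section SourceMove

variable [Finite V]

lemma rel_of_adj (hr : r ∈ acyclicOrientationsWithSource G x) (hxy : G.Adj x y) : r x y := by
  obtain ⟨⟨ho, hac⟩, hreach⟩ := mem_acyclicOrientationsWithSource_iff.mp hr
  by_contra hn
  have hyx : r y x := not_not.mp fun hyx => hn ((ho.2 x y hxy).mpr hyx)
  exact hac x (TransGen.tail' (hreach y) hyx)

lemma notMem_reachSet_of_adj (hr : r ∈ acyclicOrientationsWithSource G x) (hxy : G.Adj x y) :
    x ∉ reachSet r y :=
  fun h => hr.1.2 x (TransGen.head' (rel_of_adj hr hxy) h)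

lemma reflTransGen_flipAcross_of_notMem_reachSet
    (hr : r ∈ acyclicOrientationsWithSource G x) (hxy : G.Adj x y) (ha : a ∉ reachSet r y) :
    ReflTransGen (flipAcross r (reachSet r y)) x a :=
  isForwardClosed_reachSet.reflTransGen_flipAcross
    ((mem_acyclicOrientationsWithSource_iff.mp hr).2 a)
    (iff_of_false (notMem_reachSet_of_adj hr hxy) ha)

lemma flipAcross_reachSet_mem (hr : r ∈ acyclicOrientationsWithSource G x) (hxy : G.Adj x y) :
    flipAcross r (reachSet r y) ∈ acyclicOrientationsWithSource G y := by
  have hy : y ∈ reachSet r y := ReflTransGen.refl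
  have hx := notMem_reachSet_of_adj hr hxy
  refine mem_acyclicOrientationsWithSource_iff.mpr
    ⟨IsAcyclicOrientation.flipAcross hr.1 isForwardClosed_reachSet, fun a => ?_⟩
  by_cases ha : a ∈ reachSet r y
  · exact isForwardClosed_reachSet.reflTransGen_flipAcross ha (iff_of_true hy ha)
  · have hyx : flipAcross r (reachSet r y) y x :=
      (flipAcross_iff_of_not_iff fun h => hx (h.mp hy)).mpr (rel_of_adj hr hxy)
    exact .head hyx (reflTransGen_flipAcross_of_notMem_reachSet hr hxy ha)

lemma reachSet_flipAcross_reachSet (hr : r ∈ acyclicOrientationsWithSource G x)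
    (hxy : G.Adj x y) :
    reachSet (flipAcross r (reachSet r y)) x = (reachSet r y)ᶜ := by
  refine Set.Subset.antisymm (fun a ha => ?_) fun a ha =>
    reflTransGen_flipAcross_of_notMem_reachSet hr hxy ha
  exact isForwardClosed_reachSet.compl_flipAcross.mem_of_reflTransGen ha
    (notMem_reachSet_of_adj hr hxy)

lemma flipAcross_reachSet_flipAcross_reachSet (hr : r ∈ acyclicOrientationsWithSource G x)
    (hxy : G.Adj x y) :
    flipAcross (flipAcross r (reachSet r y)) (reachSet (flipAcross r (reachSet r y)) x) = r := by
  rw [reachSet_flipAcross_reachSet hr hxy, flipAcross_compl, flipAcross_flipAcross]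

def equivOfAdj (hxy : G.Adj x y) :
    acyclicOrientationsWithSource G x ≃ acyclicOrientationsWithSource G y where
  toFun r := ⟨flipAcross r (reachSet r y), flipAcross_reachSet_mem r.2 hxy⟩
  invFun s := ⟨flipAcross s (reachSet s x), flipAcross_reachSet_mem s.2 hxy.symm⟩
  left_inv r := Subtype.ext (flipAcross_reachSet_flipAcross_reachSet r.2 hxy)
  right_inv s := Subtype.ext (flipAcross_reachSet_flipAcross_reachSet s.2 hxy.symm)

lemma nonempty_equiv_of_reachable (h : G.Reachable x y) :
    Nonempty (acyclicOrientationsWithSource G x ≃ acyclicOrientationsWithSource G y) := by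
  rw [SimpleGraph.reachable_iff_reflTransGen] at h
  induction h with
  | refl => exact ⟨Equiv.refl _⟩
  | tail _ hbc ih => exact ih.map (·.trans (equivOfAdj hbc))

lemma reachable_of_mem (hr : r ∈ acyclicOrientationsWithSource G x) (a : V) :
    G.Reachable x a := by
  induction (mem_acyclicOrientationsWithSource_iff.mp hr).2 a with
  | refl => rfl
  | tail _ hbc ih => exact ih.trans (hr.1.1.1 _ _ hbc).reachable

end SourceMove

end AcyclicOrientation

open AcyclicOrientation

/-- For a finite simple graph `G` and vertices `x, y`, the sets `O(G, x)` and `O(G, y)`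
of acyclic orientations of `G` with unique source `x`, resp. `y`, are in bijection. -/
theorem acyclic_orientations_source_bijection {V : Type*} [Fintype V]
    (G : SimpleGraph V) (x y : V) :
    Nonempty (acyclicOrientationsWithSource G x ≃ acyclicOrientationsWithSource G y) := by
  by_cases h : G.Reachable x y
  · exact nonempty_equiv_of_reachable h
  · have hx : acyclicOrientationsWithSource G x = ∅ :=
      Set.eq_empty_of_forall_notMem fun r hr => h (reachable_of_mem hr y)
    have hy : acyclicOrientationsWithSource G y = ∅ :=
      Set.eq_empty_of_forall_notMem fun r hr => h (reachable_of_mem hr x).symm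
    rw [hx, hy]
    exact ⟨Equiv.refl _⟩
end

section
/- For any finite simple graph G, the coefficient of X in the chromatic polynomial of G equals (-1)^{|V(G)|+1} times the number of acyclic orientations of G with a unique fixed source (this number being independent of the chosen source). -/
open Relation Polynomial
open scoped Function

universe w

section Arcs

variable {V : Type*} {G : SimpleGraph V} {r : V → V → Prop} {t h x v : V}

def sources (r : V → V → Prop) : Set V := {a | ∀ b, ¬ r b a}

lemma mem_acyclicOrientationsWithSource :
    r ∈ acyclicOrientationsWithSource G x ↔ IsAcyclicOrientation G r ∧ sources r = {x} :=
  Iff.rfl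

lemma notMem_sources_of_transGen {a b : V} (hab : TransGen r a b) : b ∉ sources r := by
  obtain ⟨c, -, hcb⟩ := TransGen.tail'_iff.1 hab
  exact fun hb => hb c hcb

lemma IsOrientation.apply_of_mem_sources (hr : IsOrientation G r) (hx : x ∈ sources r)
    (hxv : G.Adj x v) : r x v :=
  (hr.2 x v hxv).2 (hx v)

lemma wellFounded_of_acyclic [Finite V] (hr : ∀ a, ¬ TransGen r a a) : WellFounded r :=
  have : IsTrans V (TransGen r) := ⟨fun _ _ _ => TransGen.trans⟩
  have : Std.Irrefl (TransGen r) := ⟨hr⟩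
  Subrelation.wf TransGen.single (Finite.wellFounded_of_trans_of_irrefl _)

def addArc (r : V → V → Prop) (t h : V) : V → V → Prop :=
  fun a b => r a b ∨ (a = t ∧ b = h)

def removeArc (r : V → V → Prop) (t h : V) : V → V → Prop :=
  fun a b => r a b ∧ ¬ (a = t ∧ b = h)

lemma transGen_or_of_transGen_addArc {a b : V} (hab : TransGen (addArc r t h) a b) :
    TransGen r a b ∨ (ReflTransGen r a t ∧ ReflTransGen r h b) := by
  induction hab with
  | single hs =>
    rcases hs with hs | ⟨rfl, rfl⟩
    · exact Or.inl (.single hs)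
    · exact Or.inr ⟨.refl, .refl⟩
  | tail _ hs ih =>
    rcases hs with hs | ⟨rfl, rfl⟩
    · rcases ih with ih | ⟨ih₁, ih₂⟩
      · exact Or.inl (ih.tail hs)
      · exact Or.inr ⟨ih₁, ih₂.tail hs⟩
    · rcases ih with ih | ⟨ih₁, -⟩
      · exact Or.inr ⟨ih.to_reflTransGen, .refl⟩
      · exact Or.inr ⟨ih₁, .refl⟩

lemma acyclic_addArc (hr : ∀ a, ¬ TransGen r a a) (ht : t ∈ sources r) (hth : t ≠ h) :
    ∀ a, ¬ TransGen (addArc r t h) a a := by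
  intro a ha
  rcases transGen_or_of_transGen_addArc ha with ha | ⟨hat, hha⟩
  · exact hr a ha
  · rcases reflTransGen_iff_eq_or_transGen.1 (hha.trans hat) with heq | hht
    · exact hth heq
    · exact notMem_sources_of_transGen hht ht

lemma sources_addArc : sources (addArc r t h) = sources r \ {h} := by
  ext a
  simp only [sources, addArc, Set.mem_ofPred_eq, Set.mem_sdiff, Set.mem_singleton_iff]
  exact ⟨fun ha => ⟨fun b hb => ha b (Or.inl hb), fun hah => ha t (Or.inr ⟨rfl, hah⟩)⟩,
    fun ⟨ha, hah⟩ b hb => hb.elim (ha b) fun hb => hah hb.2⟩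

lemma removeArc_addArc (hth : ¬ r t h) : removeArc (addArc r t h) t h = r := by
  funext a b
  simp only [removeArc, addArc, eq_iff_iff]
  constructor
  · rintro ⟨hab | hab, hne⟩
    exacts [hab, (hne hab).elim]
  · exact fun hab => ⟨Or.inl hab, fun ⟨hat, hbh⟩ => hth (hat ▸ hbh ▸ hab)⟩

lemma addArc_removeArc (hth : r t h) : addArc (removeArc r t h) t h = r := by
  funext a b
  simp only [removeArc, addArc, eq_iff_iff]
  constructor
  · rintro (⟨hab, -⟩ | ⟨rfl, rfl⟩)
    exacts [hab, hth]
  · intro hab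
    by_cases hab' : a = t ∧ b = h
    exacts [Or.inr hab', Or.inl ⟨hab, hab'⟩]

lemma deleteEdges_singleton_adj {a b : V} :
    (G.deleteEdges {s(t, h)}).Adj a b ↔
      G.Adj a b ∧ ¬ (a = t ∧ b = h) ∧ ¬ (a = h ∧ b = t) := by
  simp [SimpleGraph.deleteEdges_adj, not_or]

lemma IsOrientation.addArc (hr : IsOrientation (G.deleteEdges {s(t, h)}) r) (hth : G.Adj t h) :
    IsOrientation G (addArc r t h) := by
  have hdel : ∀ a b, r a b → G.Adj a b ∧ ¬ (a = t ∧ b = h) ∧ ¬ (a = h ∧ b = t) :=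
    fun a b hab => deleteEdges_singleton_adj.1 (hr.1 a b hab)
  refine ⟨fun a b hab => hab.elim (fun hab => (hdel a b hab).1)
    fun ⟨ha, hb⟩ => ha ▸ hb ▸ hth, fun a b hab => ?_⟩
  by_cases hedge : (a = t ∧ b = h) ∨ (a = h ∧ b = t)
  · have hne := hth.ne
    simp only [_root_.addArc]
    rcases hedge with ⟨rfl, rfl⟩ | ⟨rfl, rfl⟩
    · have : ¬ r b a := fun hba => (hdel b a hba).2.2 ⟨rfl, rfl⟩
      simp [this, hne.symm]
    · have : ¬ r a b := fun hab => (hdel a b hab).2.2 ⟨rfl, rfl⟩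
      simp [this, hne]
  · have := hr.2 a b (deleteEdges_singleton_adj.2 ⟨hab, not_or.1 hedge⟩)
    simp only [_root_.addArc]
    tauto

lemma IsOrientation.removeArc (hr : IsOrientation G r) (hth : r t h) :
    IsOrientation (G.deleteEdges {s(t, h)}) (removeArc r t h) := by
  have hht : ¬ r h t := (hr.2 t h (hr.1 t h hth)).1 hth
  refine ⟨fun a b ⟨hab, hne⟩ => deleteEdges_singleton_adj.2 ⟨hr.1 a b hab, hne, ?_⟩,
    fun a b hab => ?_⟩
  · rintro ⟨rfl, rfl⟩
    exact hht hab
  · obtain ⟨hab, hne, hne'⟩ := deleteEdges_singleton_adj.1 hab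
    have := hr.2 a b hab
    simp only [_root_.removeArc]
    tauto

lemma acyclic_removeArc (hr : ∀ a, ¬ TransGen r a a) :
    ∀ a, ¬ TransGen (removeArc r t h) a a :=
  fun a ha => hr a (TransGen.mono (fun _ _ hab => hab.1) a a ha)

end Arcs

section MapOrientation

/- Under `hf`, `f` only identifies sources of `r`, so every arc of `r` enters a vertex that is
alone in its fibre: this is what makes `Relation.Map r f f` an acyclic orientation of `G.map f`. -/

variable {V W : Type*} {G : SimpleGraph V} {r : V → V → Prop} {f : V → W}

lemma map_apply_iff_of_adj (hr : IsOrientation G r)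
    (hf : ∀ a b, f a = f b → a ≠ b → a ∈ sources r) {a b : V} (hab : G.Adj a b) :
    Relation.Map r f f (f a) (f b) ↔ r a b := by
  refine ⟨?_, fun h => ⟨a, b, h, rfl, rfl⟩⟩
  rintro ⟨a', b', h', ha, hb⟩
  obtain rfl : b' = b := by_contra fun hne => hf b' b hb hne a' h'
  by_cases ha' : a' = a
  · exact ha' ▸ h'
  · exact (hr.2 a b' hab).2 (hf a a' ha.symm (Ne.symm ha') b')

lemma IsOrientation.map (hr : IsOrientation G r)
    (hf : ∀ a b, f a = f b → a ≠ b → a ∈ sources r) :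
    IsOrientation (G.map f) (Relation.Map r f f) := by
  refine ⟨?_, ?_⟩
  · rintro _ _ ⟨a, b, hab, rfl, rfl⟩
    exact ⟨fun heq => hf b a heq.symm (hr.1 a b hab).ne' a hab, a, b, hr.1 a b hab, rfl, rfl⟩
  · rintro _ _ ⟨-, a, b, hab, rfl, rfl⟩
    rw [map_apply_iff_of_adj hr hf hab, map_apply_iff_of_adj hr hf hab.symm]
    exact hr.2 a b hab

lemma exists_transGen_of_transGen_map (hf : ∀ a b, f a = f b → a ≠ b → a ∈ sources r)
    {c d : W} (hcd : TransGen (Relation.Map r f f) c d) :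
    ∃ a b, f a = c ∧ f b = d ∧ TransGen r a b := by
  induction hcd with
  | single hcd =>
    obtain ⟨a, b, hab, rfl, rfl⟩ := hcd
    exact ⟨a, b, rfl, rfl, .single hab⟩
  | tail _ hcd ih =>
    obtain ⟨a, b, rfl, hb, hab⟩ := ih
    obtain ⟨b', d, hbd, hb', rfl⟩ := hcd
    obtain rfl : b = b' := by_contra fun hne =>
      notMem_sources_of_transGen hab (hf b b' (hb.trans hb'.symm) hne)
    exact ⟨a, d, rfl, rfl, hab.tail hbd⟩

lemma acyclic_map (hr : ∀ a, ¬ TransGen r a a)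
    (hf : ∀ a b, f a = f b → a ≠ b → a ∈ sources r) :
    ∀ c, ¬ TransGen (Relation.Map r f f) c c := by
  intro c hc
  obtain ⟨a, b, ha, hb, hab⟩ := exists_transGen_of_transGen_map hf hc
  by_cases hba : b = a
  · exact hr a (hba ▸ hab)
  · exact notMem_sources_of_transGen hab (hf b a (hb.trans ha.symm) hba)

lemma sources_map : sources (Relation.Map r f f) = {c | ∀ a, f a = c → a ∈ sources r} := by
  ext c
  refine ⟨fun hc a ha b hba => hc (f b) ⟨b, a, hba, rfl, ha⟩, ?_⟩
  rintro hc _ ⟨a, b, hab, rfl, rfl⟩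
  exact hc b rfl a hab

lemma inf_onFun_map (hr : IsOrientation G r)
    (hf : ∀ a b, f a = f b → a ≠ b → a ∈ sources r) :
    G.Adj ⊓ (Relation.Map r f f on f) = r := by
  funext a b
  exact propext ⟨fun ⟨hab, h⟩ => (map_apply_iff_of_adj hr hf hab).1 h,
    fun h => ⟨hr.1 a b h, a, b, h, rfl, rfl⟩⟩

variable {o : W → W → Prop}

lemma IsOrientation.inf_onFun (ho : IsOrientation (G.map f) o)
    (hG : ∀ a b, G.Adj a b → f a ≠ f b) : IsOrientation G (G.Adj ⊓ (o on f)) := by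
  refine ⟨fun a b hab => hab.1, fun a b hab => ?_⟩
  have := ho.2 (f a) (f b) ⟨hG a b hab, a, b, hab, rfl, rfl⟩
  change G.Adj a b ∧ o (f a) (f b) ↔ ¬ (G.Adj b a ∧ o (f b) (f a))
  rw [this]
  simp [hab, hab.symm]

lemma acyclic_inf_onFun (ho : ∀ c, ¬ TransGen o c c) :
    ∀ a, ¬ TransGen (G.Adj ⊓ (o on f)) a a :=
  fun a ha => ho (f a) (TransGen.lift f (fun _ _ hab => hab.2) a a ha)

lemma map_inf_onFun (ho : IsOrientation (G.map f) o) :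
    Relation.Map (G.Adj ⊓ (o on f)) f f = o := by
  funext c d
  refine propext ⟨fun ⟨a, b, ⟨_, hab⟩, ha, hb⟩ => ha ▸ hb ▸ hab, fun hcd => ?_⟩
  obtain ⟨-, a, b, hab, rfl, rfl⟩ := ho.1 c d hcd
  exact ⟨a, b, ⟨hab, hcd⟩, rfl, rfl⟩

end MapOrientation

section Contraction

variable {V : Type*} {u v : V}

open Classical in
noncomputable def mergeVertex (huv : u ≠ v) (w : V) : {w : V // w ≠ v} :=
  if hw : w = v then ⟨u, huv⟩ else ⟨w, hw⟩

@[simp] lemma mergeVertex_self (huv : u ≠ v) : mergeVertex huv v = ⟨u, huv⟩ := by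
  simp [mergeVertex]

lemma mergeVertex_of_ne (huv : u ≠ v) {w : V} (hw : w ≠ v) :
    mergeVertex huv w = ⟨w, hw⟩ := by
  simp [mergeVertex, hw]

lemma mergeVertex_surjective (huv : u ≠ v) : Function.Surjective (mergeVertex huv) :=
  fun w => ⟨w, mergeVertex_of_ne huv w.2⟩

lemma mergeVertex_eq_mergeVertex_iff (huv : u ≠ v) {a b : V} :
    mergeVertex huv a = mergeVertex huv b ↔
      a = b ∨ (a = u ∨ a = v) ∧ (b = u ∨ b = v) := by
  unfold mergeVertex
  split_ifs with ha hb hb <;> simp only [Subtype.mk.injEq] <;> grind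

lemma mergeVertex_eq_mergeVertex_left_iff (huv : u ≠ v) {a : V} :
    mergeVertex huv a = mergeVertex huv u ↔ a = u ∨ a = v := by
  rw [mergeVertex_eq_mergeVertex_iff]
  tauto

lemma apply_coe_mergeVertex {α : Type*} (huv : u ≠ v) {f : V → α} (hf : f u = f v) (a : V) :
    f (mergeVertex huv a) = f a := by
  by_cases ha : a = v
  · simp [ha, hf]
  · simp [mergeVertex_of_ne huv ha]

noncomputable def SimpleGraph.contractEdge (G : SimpleGraph V) (huv : u ≠ v) :
    SimpleGraph {w : V // w ≠ v} :=
  (G.deleteEdges {s(u, v)}).map (mergeVertex huv)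

lemma mergeVertex_ne_of_adj {G : SimpleGraph V} (huv : u ≠ v) {a b : V}
    (hab : (G.deleteEdges {s(u, v)}).Adj a b) : mergeVertex huv a ≠ mergeVertex huv b := by
  rw [Ne, mergeVertex_eq_mergeVertex_iff]
  obtain ⟨hab, hne, hne'⟩ := deleteEdges_singleton_adj.1 hab
  grind [hab.ne]

lemma card_subtype_ne_add_one [Finite V] (v : V) :
    Nat.card {w : V // w ≠ v} + 1 = Nat.card V := by
  rw [← Set.ncard_add_ncard_compl {v}, Set.ncard_singleton, add_comm, ← Nat.card_coe_set_eq]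
  rfl

end Contraction

theorem SimpleGraph.induction_deleteEdges_contractEdge
    {motive : ∀ {V : Type w} [Finite V], SimpleGraph V → Prop}
    (step : ∀ {V : Type w} [Finite V] (G : SimpleGraph V),
      (∀ u v (h : G.Adj u v),
        motive (G.deleteEdges {s(u, v)}) ∧ motive (G.contractEdge h.ne)) → motive G)
    {V : Type w} [Finite V] (G : SimpleGraph V) : motive G := by
  obtain ⟨n, hn⟩ : ∃ n, Nat.card V = n := ⟨_, rfl⟩
  obtain ⟨m, hm⟩ : ∃ m, G.edgeSet.ncard = m := ⟨_, rfl⟩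
  induction n using Nat.strong_induction_on generalizing V m with | _ n ihn
  induction m using Nat.strong_induction_on generalizing G with | _ m ihm
  refine step G fun u v h => ⟨ihm _ ?_ _ rfl, ihn _ ?_ _ rfl _ rfl⟩
  · rw [← hm, SimpleGraph.edgeSet_deleteEdges]
    exact Set.ncard_sdiff_singleton_lt_of_mem h
  · rw [← hn]
    exact Finite.card_subtype_lt (x := v) (not_not.2 rfl)

section OrientationRecurrence

variable {V : Type*} {G : SimpleGraph V} {r : V → V → Prop} {x v : V}

lemma apply_of_mem_acyclicOrientationsWithSource (hr : r ∈ acyclicOrientationsWithSource G x)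
    (hxv : G.Adj x v) : r x v :=
  hr.1.1.apply_of_mem_sources (by rw [(mem_acyclicOrientationsWithSource.1 hr).2]; rfl) hxv

def removeArcEquiv (hxv : G.Adj x v) :
    acyclicOrientationsWithSource G x ≃
      {r | IsAcyclicOrientation (G.deleteEdges {s(x, v)}) r ∧ sources r \ {v} = {x}} where
  toFun r :=
    have hrxv := apply_of_mem_acyclicOrientationsWithSource r.2 hxv
    ⟨removeArc r.1 x v, ⟨r.2.1.1.removeArc hrxv, acyclic_removeArc r.2.1.2⟩, by
      rw [← sources_addArc, addArc_removeArc hrxv]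
      exact r.2.2⟩
  invFun r :=
    have hx : x ∈ sources r.1 := by
      have : x ∈ sources r.1 \ {v} := by rw [r.2.2]; rfl
      exact this.1
    ⟨addArc r.1 x v, ⟨r.2.1.1.addArc hxv, acyclic_addArc r.2.1.2 hx hxv.ne⟩, by
      change sources _ = _
      rw [sources_addArc]
      exact r.2.2⟩
  left_inv r := Subtype.ext (addArc_removeArc (apply_of_mem_acyclicOrientationsWithSource r.2 hxv))
  right_inv r := Subtype.ext (removeArc_addArc fun hrxv =>
    (deleteEdges_singleton_adj.1 (r.2.1.1.1 x v hrxv)).2.1 ⟨rfl, rfl⟩)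

lemma Set.sdiff_singleton_eq_singleton_iff {α : Type*} {s : Set α} {a b : α} (hab : a ≠ b) :
    s \ {b} = {a} ↔ s = {a} ∨ s = {a, b} := by
  constructor
  · intro hs
    by_cases hb : b ∈ s
    · right
      rw [← Set.insert_eq_of_mem hb, ← Set.insert_sdiff_singleton, hs, Set.pair_comm]
    · left
      rwa [Set.sdiff_singleton_eq_self hb] at hs
  · rintro (rfl | rfl)
    · exact Set.sdiff_singleton_eq_self hab.symm
    · ext c
      simp only [Set.mem_sdiff, Set.mem_insert_iff, Set.mem_singleton_iff]
      grind

open Classical in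
noncomputable def sourcesSplitEquiv (hxv : x ≠ v) (H : SimpleGraph V) :
    {r | IsAcyclicOrientation H r ∧ sources r \ {v} = {x}} ≃
      acyclicOrientationsWithSource H x ⊕ {r | IsAcyclicOrientation H r ∧ sources r = {x, v}} :=
  (Equiv.subtypeEquivRight fun r => by
    simp only [Set.mem_ofPred_eq, Set.sdiff_singleton_eq_singleton_iff hxv, and_or_left]
    rfl).trans
  (subtypeOrEquiv _ _ fun _ hp hq r hr => by
    have hv : v ∈ ({x} : Set V) := by
      rw [← (mem_acyclicOrientationsWithSource.1 (hp r hr)).2, (hq r hr).2]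
      exact Set.mem_insert_of_mem _ rfl
    exact hxv hv.symm)

lemma mem_sources_of_mergeVertex_eq (hxv : x ≠ v) (hr : sources r = {x, v}) {a b : V}
    (hab : mergeVertex hxv a = mergeVertex hxv b) (hne : a ≠ b) : a ∈ sources r := by
  rw [hr]
  grind [mergeVertex_eq_mergeVertex_iff]

lemma sources_map_mergeVertex_eq_iff (hxv : x ≠ v) :
    sources (Relation.Map r (mergeVertex hxv) (mergeVertex hxv)) = {mergeVertex hxv x} ↔
      sources r = {x, v} := by
  rw [sources_map]
  constructor
  · intro h
    ext a
    constructor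
    · intro ha
      by_contra hav
      have : mergeVertex hxv a ∈ ({mergeVertex hxv x} : Set _) := by
        rw [← h]
        intro a' ha'
        obtain rfl : a' = a := by grind [mergeVertex_eq_mergeVertex_iff]
        exact ha
      exact hav ((mergeVertex_eq_mergeVertex_left_iff hxv).1 this)
    · intro ha
      have : mergeVertex hxv a ∈ ({mergeVertex hxv x} : Set _) :=
        Set.mem_singleton_iff.2 ((mergeVertex_eq_mergeVertex_left_iff hxv).2 ha)
      rw [← h] at this
      exact this a rfl
  · intro h
    ext c
    rw [h]
    constructor
    · intro hc
      obtain ⟨a, rfl⟩ := mergeVertex_surjective hxv c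
      exact (mergeVertex_eq_mergeVertex_left_iff hxv).2 (hc a rfl)
    · rintro rfl a ha
      exact (mergeVertex_eq_mergeVertex_left_iff hxv).1 ha

def mapMergeVertexEquiv (hxv : x ≠ v) :
    {r | IsAcyclicOrientation (G.deleteEdges {s(x, v)}) r ∧ sources r = {x, v}} ≃
      acyclicOrientationsWithSource (G.contractEdge hxv) (mergeVertex hxv x) where
  toFun r :=
    have hf := fun a b => mem_sources_of_mergeVertex_eq hxv r.2.2 (a := a) (b := b)
    ⟨Relation.Map r.1 (mergeVertex hxv) (mergeVertex hxv),
      ⟨r.2.1.1.map hf, acyclic_map r.2.1.2 hf⟩, (sources_map_mergeVertex_eq_iff hxv).2 r.2.2⟩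
  invFun o :=
    ⟨(G.deleteEdges {s(x, v)}).Adj ⊓ (o.1 on mergeVertex hxv),
      ⟨o.2.1.1.inf_onFun fun _ _ => mergeVertex_ne_of_adj hxv, acyclic_inf_onFun o.2.1.2⟩,
      (sources_map_mergeVertex_eq_iff hxv).1 (by rw [map_inf_onFun o.2.1.1]; exact o.2.2)⟩
  left_inv r := Subtype.ext <|
    inf_onFun_map r.2.1.1 fun _ _ => mem_sources_of_mergeVertex_eq hxv r.2.2
  right_inv o := Subtype.ext (map_inf_onFun o.2.1.1)

end OrientationRecurrence

section OrientationCount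

variable {V : Type*} {G : SimpleGraph V} {x v : V}

lemma card_acyclicOrientationsWithSource_eq_add [Finite V] (hxv : G.Adj x v) :
    Nat.card (acyclicOrientationsWithSource G x) =
      Nat.card (acyclicOrientationsWithSource (G.deleteEdges {s(x, v)}) x) +
        Nat.card (acyclicOrientationsWithSource (G.contractEdge hxv.ne)
          (mergeVertex hxv.ne x)) := by
  rw [Nat.card_congr (removeArcEquiv hxv),
    Nat.card_congr (sourcesSplitEquiv hxv.ne _), Nat.card_sum,
    Nat.card_congr (mapMergeVertexEquiv hxv.ne)]

lemma acyclicOrientationsWithSource_eq_empty [Finite V] (hx : ∀ b, ¬ G.Adj x b) {y : V}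
    (hy : y ≠ x) : acyclicOrientationsWithSource G x = ∅ := by
  refine Set.eq_empty_of_forall_notMem fun r hr => ?_
  obtain ⟨⟨hor, hacyc⟩, hsrc⟩ := mem_acyclicOrientationsWithSource.1 hr
  obtain ⟨m, hm, hmin⟩ := (wellFounded_of_acyclic hacyc).has_min {y | y ≠ x} ⟨y, hy⟩
  have : m ∉ sources r := by
    rw [hsrc]
    exact hm
  simp only [sources, Set.mem_ofPred_eq, not_forall, not_not] at this
  obtain ⟨b, hbm⟩ := this
  refine hmin b (fun hbx => ?_) hbm
  exact hx m (hbx ▸ hor.1 b m hbm)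

lemma acyclicOrientationsWithSource_of_subsingleton [Subsingleton V] :
    acyclicOrientationsWithSource G x = {⊥} := by
  have hG : ∀ a b, ¬ G.Adj a b := fun a b hab => hab.ne (Subsingleton.elim a b)
  ext r
  rw [Set.mem_singleton_iff, mem_acyclicOrientationsWithSource]
  constructor
  · rintro ⟨⟨hor, -⟩, -⟩
    funext a b
    exact propext ⟨fun hab => hG a b (hor.1 a b hab), False.elim⟩
  · rintro rfl
    refine ⟨⟨⟨fun a b hab => hab.elim, fun a b hab => (hG a b hab).elim⟩,
      fun a ha => ?_⟩, ?_⟩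
    · obtain ⟨c, -, hc⟩ := TransGen.tail'_iff.1 ha
      exact hc
    · exact Set.eq_singleton_iff_unique_mem.2 ⟨fun _ h => h, fun _ _ => Subsingleton.elim _ _⟩

end OrientationCount

section Colorings

variable {V α : Type*} {G : SimpleGraph V} {u v x : V}

abbrev ProperColorings (G : SimpleGraph V) (α : Type*) :=
  {f : V → α // ∀ a b, G.Adj a b → f a ≠ f b}

noncomputable def properColoringsContractEquiv (huv : u ≠ v) :
    {f : V → α // (∀ a b, (G.deleteEdges {s(u, v)}).Adj a b → f a ≠ f b) ∧ f u = f v} ≃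
      ProperColorings (G.contractEdge huv) α where
  toFun f := ⟨fun c => f.1 c, by
    rintro _ _ ⟨-, a, b, hab, rfl, rfl⟩
    dsimp only
    rw [apply_coe_mergeVertex huv f.2.2, apply_coe_mergeVertex huv f.2.2]
    exact f.2.1 a b hab⟩
  invFun g := ⟨fun a => g.1 (mergeVertex huv a),
    ⟨fun a b hab => g.2 _ _ ⟨mergeVertex_ne_of_adj huv hab, a, b, hab, rfl, rfl⟩,
      by dsimp only; rw [mergeVertex_self, mergeVertex_of_ne huv huv]⟩⟩
  left_inv f := Subtype.ext (funext (apply_coe_mergeVertex huv f.2.2))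
  right_inv g := Subtype.ext (funext fun c => by simp [mergeVertex_of_ne huv c.2])

lemma properColorings_deleteEdges_iff (huv : G.Adj u v) {f : V → α} :
    (∀ a b, (G.deleteEdges {s(u, v)}).Adj a b → f a ≠ f b) ↔
      (∀ a b, G.Adj a b → f a ≠ f b) ∨
        (∀ a b, (G.deleteEdges {s(u, v)}).Adj a b → f a ≠ f b) ∧ f u = f v := by
  constructor
  · intro hf
    by_cases hfuv : f u = f v
    · exact Or.inr ⟨hf, hfuv⟩
    refine Or.inl fun a b hab => ?_
    by_cases hedge : (a = u ∧ b = v) ∨ (a = v ∧ b = u)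
    · rcases hedge with ⟨rfl, rfl⟩ | ⟨rfl, rfl⟩
      exacts [hfuv, Ne.symm hfuv]
    · exact hf a b (deleteEdges_singleton_adj.2 ⟨hab, not_or.1 hedge⟩)
  · rintro (hf | ⟨hf, -⟩) a b hab
    exacts [hf a b (deleteEdges_singleton_adj.1 hab).1, hf a b hab]

open Classical in
noncomputable def properColoringsDeleteEquiv (huv : G.Adj u v) :
    ProperColorings (G.deleteEdges {s(u, v)}) α ≃
      ProperColorings G α ⊕ ProperColorings (G.contractEdge huv.ne) α :=
  (Equiv.subtypeEquivRight fun _ => properColorings_deleteEdges_iff huv).trans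
    ((subtypeOrEquiv _ _ fun _ hp hq f hf => (hp f hf) u v huv (hq f hf).2).trans
      (Equiv.sumCongr (Equiv.refl _) (properColoringsContractEquiv huv.ne)))

open Classical in
noncomputable def properColoringsIsolatedEquiv (hx : ∀ b, ¬ G.Adj x b) :
    ProperColorings G α ≃ α × ProperColorings (G.induce {x}ᶜ) α where
  toFun f := (f.1 x, ⟨fun c => f.1 c, fun a b hab => f.2 a b hab⟩)
  invFun p := ⟨fun w => if hw : w = x then p.1 else p.2.1 ⟨w, hw⟩, fun a b hab => by
    have ha : a ≠ x := by rintro rfl; exact hx b hab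
    have hb : b ≠ x := by rintro rfl; exact hx a hab.symm
    simpa [ha, hb] using p.2.2 ⟨a, ha⟩ ⟨b, hb⟩ hab⟩
  left_inv f := Subtype.ext (funext fun w => by by_cases hw : w = x <;> simp [hw])
  right_inv p := by
    ext c
    · simp
    · exact dif_neg c.2

end Colorings

section ColorCount

variable {V : Type*} {G : SimpleGraph V} {u v x : V}

noncomputable def colorCount (G : SimpleGraph V) (q : ℕ) : ℕ :=
  Nat.card (ProperColorings G (Fin q))

lemma colorCount_deleteEdges [Finite V] (huv : G.Adj u v) (q : ℕ) :
    colorCount (G.deleteEdges {s(u, v)}) q =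
      colorCount G q + colorCount (G.contractEdge huv.ne) q := by
  rw [colorCount, Nat.card_congr (properColoringsDeleteEquiv huv), Nat.card_sum]
  rfl

lemma colorCount_of_isolated (hx : ∀ b, ¬ G.Adj x b) (q : ℕ) :
    colorCount G q = q * colorCount (G.induce {x}ᶜ) q := by
  rw [colorCount, Nat.card_congr (properColoringsIsolatedEquiv hx), Nat.card_prod, Nat.card_fin]
  rfl

lemma colorCount_of_forall_not_adj [Finite V] (hG : ∀ a b, ¬ G.Adj a b) (q : ℕ) :
    colorCount G q = q ^ Nat.card V := by
  rw [colorCount, Nat.card_congr (Equiv.subtypeUnivEquiv fun f a b hab => (hG a b hab).elim),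
    Nat.card_fun, Nat.card_fin]

lemma colorCount_zero [Nonempty V] : colorCount G 0 = 0 :=
  Nat.card_of_isEmpty

lemma colorCount_of_isEmpty [IsEmpty V] (q : ℕ) : colorCount G q = 1 :=
  Nat.card_eq_one_iff_unique.2 ⟨inferInstance, ⟨⟨isEmptyElim, fun a => isEmptyElim a⟩⟩⟩

end ColorCount

section ChromaticPolynomial

variable {V : Type w} [Finite V] {G : SimpleGraph V} {u v x : V}

theorem exists_eval_eq_colorCount (G : SimpleGraph V) :
    ∃ P : ℤ[X], ∀ q : ℕ, P.eval (q : ℤ) = colorCount G q := by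
  refine SimpleGraph.induction_deleteEdges_contractEdge
    (motive := fun G => ∃ P : ℤ[X], ∀ q : ℕ, P.eval (q : ℤ) = colorCount G q)
    (fun {W} _ G ih => ?_) G
  by_cases hG : ∃ u v, G.Adj u v
  · obtain ⟨u, v, huv⟩ := hG
    obtain ⟨⟨P, hP⟩, ⟨Q, hQ⟩⟩ := ih u v huv
    refine ⟨P - Q, fun q => ?_⟩
    rw [eval_sub, hP, hQ, colorCount_deleteEdges huv]
    push_cast
    ring
  · push Not at hG
    exact ⟨X ^ Nat.card W, fun q => by simp [colorCount_of_forall_not_adj hG]⟩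

noncomputable def chromaticPolynomial (G : SimpleGraph V) : ℤ[X] :=
  (exists_eval_eq_colorCount G).choose

lemma eval_chromaticPolynomial (G : SimpleGraph V) (q : ℕ) :
    (chromaticPolynomial G).eval (q : ℤ) = colorCount G q :=
  (exists_eval_eq_colorCount G).choose_spec q

lemma eq_chromaticPolynomial {P : ℤ[X]} (hP : ∀ q : ℕ, P.eval (q : ℤ) = colorCount G q) :
    P = chromaticPolynomial G :=
  eq_of_infinite_eval_eq _ _ <| (Set.infinite_range_of_injective Nat.cast_injective).mono <| by
    rintro _ ⟨q, rfl⟩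
    simp [hP, eval_chromaticPolynomial]

lemma chromaticPolynomial_eq_sub (huv : G.Adj u v) :
    chromaticPolynomial G =
      chromaticPolynomial (G.deleteEdges {s(u, v)}) - chromaticPolynomial (G.contractEdge huv.ne) :=
  (eq_chromaticPolynomial fun q => by
    rw [eval_sub, eval_chromaticPolynomial, eval_chromaticPolynomial, colorCount_deleteEdges huv]
    push_cast
    ring).symm

lemma chromaticPolynomial_of_isolated (hx : ∀ b, ¬ G.Adj x b) :
    chromaticPolynomial G = X * chromaticPolynomial (G.induce {x}ᶜ) :=
  (eq_chromaticPolynomial fun q => by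
    rw [eval_mul, eval_X, eval_chromaticPolynomial, colorCount_of_isolated hx]
    push_cast
    ring).symm

lemma coeff_one_chromaticPolynomial_of_isolated (hx : ∀ b, ¬ G.Adj x b) :
    (chromaticPolynomial G).coeff 1 =
      (-1) ^ (Nat.card V + 1) * Nat.card (acyclicOrientationsWithSource G x) := by
  have h₀ := eval_chromaticPolynomial (G.induce {x}ᶜ) 0
  rw [Nat.cast_zero] at h₀
  rw [chromaticPolynomial_of_isolated hx, coeff_X_mul, coeff_zero_eq_eval_zero, h₀]
  by_cases hy : ∃ y, y ≠ x
  · obtain ⟨y, hy⟩ := hy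
    have : Nonempty ({x}ᶜ : Set V) := ⟨⟨y, hy⟩⟩
    rw [colorCount_zero, acyclicOrientationsWithSource_eq_empty hx hy]
    simp
  · push Not at hy
    have : Subsingleton V := ⟨fun a b => (hy a).trans (hy b).symm⟩
    have : IsEmpty ({x}ᶜ : Set V) := ⟨fun c => c.2 (hy c)⟩
    rw [colorCount_of_isEmpty, acyclicOrientationsWithSource_of_subsingleton,
      Nat.card_eq_one_iff_unique.2 ⟨inferInstance, ⟨x⟩⟩]
    simp

end ChromaticPolynomial

theorem coeff_one_chromaticPolynomial {V : Type w} [Finite V] (G : SimpleGraph V) (x : V) :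
    (chromaticPolynomial G).coeff 1 =
      (-1) ^ (Nat.card V + 1) * Nat.card (acyclicOrientationsWithSource G x) := by
  refine SimpleGraph.induction_deleteEdges_contractEdge (motive := fun {W} _ G => ∀ x : W,
      (chromaticPolynomial G).coeff 1 =
        (-1) ^ (Nat.card W + 1) * Nat.card (acyclicOrientationsWithSource G x))
    (fun {W} _ G ih x => ?_) G x
  by_cases hx : ∃ v, G.Adj x v
  · obtain ⟨v, hxv⟩ := hx
    rw [chromaticPolynomial_eq_sub hxv, coeff_sub, (ih x v hxv).1 x,
      (ih x v hxv).2 (mergeVertex hxv.ne x), card_acyclicOrientationsWithSource_eq_add hxv,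
      ← card_subtype_ne_add_one v]
    push_cast
    ring
  · push Not at hx
    exact coeff_one_chromaticPolynomial_of_isolated hx

/-- For any finite simple graph `G`, the coefficient of `X` in the chromatic
polynomial of `G` (the polynomial `P` with `P(q) = ` number of proper `q`-colorings)
equals `(-1)^{|V(G)|+1}` times the number of acyclic orientations of `G` with a
unique fixed source (this number being independent of the chosen source). -/
theorem chromatic_coeff_one_eq_acyclic_orientations {V : Type*} [Fintype V]
    (G : SimpleGraph V) (P : Polynomial ℤ)
    (hP : ∀ q : ℕ, P.eval (q : ℤ)
      = Nat.card {f : V → Fin q // ∀ a b : V, G.Adj a b → f a ≠ f b}) :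
    ∀ x : V, P.coeff 1
      = (-1) ^ (Fintype.card V + 1)
          * Nat.card (acyclicOrientationsWithSource G x) := by
  intro x
  rw [eq_chromaticPolynomial hP, ← Nat.card_eq_fintype_card]
  exact coeff_one_chromaticPolynomial G x
end
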